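/- arXiv:2006.01325 — 3 statements merged into one kernel-verified Lean document; each statement's English description precedes it below -/
import Mathlib

section
/- Let q ∈ (0,1) and define L(x) = x · ln(1 - q^{x-1}) for integer x ≥ 2. Then for x₀ = ⌈1/(1-q)⌉ + 1, writing p = 1 - q, one has -L(x₀) ≥ c/p for some absolute constant c > 0 (valid for all 0 < p ≤ 1/2). In particular, max over integers x ≥ 2 of -x · ln(1 - q^{x-1}) is Ω(1/p). -/
open Real

lemma exp_neg_two_le (p : ℝ) (hp : 0 < p) (hp2 : p ≤ 1 / 2) :
    Real.exp (-(2 * p)) ≤ 1 - p := by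
  have h1 : (1 : ℝ) + 2 * p ≤ Real.exp (2 * p) := by
    have := Real.add_one_le_exp (2 * p); linarith
  have hpos : (0:ℝ) < 1 + 2 * p := by linarith
  have h2 : Real.exp (-(2 * p)) = (Real.exp (2 * p))⁻¹ := by
    rw [Real.exp_neg]
  rw [h2]
  have h3 : (Real.exp (2 * p))⁻¹ ≤ (1 + 2 * p)⁻¹ := by
    apply inv_anti₀ hpos h1
  have h4 : (1 + 2 * p)⁻¹ ≤ 1 - p := by
    rw [inv_le_iff_one_le_mul₀ hpos]
    nlinarith
  linarith

/-- There is a universal constant `c > 0` such that for all `p ∈ (0, 1/2]`, with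
`q = 1 - p` and `x₀ = ⌈1/p⌉ + 1`, we have `x₀ * ln(1/(1 - q^(x₀-1))) ≥ c / p`.
In particular `max_{x ≥ 2} (-x * ln(1 - q^(x-1)))` is `Ω(1/p)`. -/
theorem stmt4 :
    ∃ c : ℝ, 0 < c ∧ ∀ p : ℝ, 0 < p → p ≤ 1 / 2 →
      ((⌈1 / p⌉₊ + 1 : ℕ) : ℝ) *
        Real.log (1 / (1 - (1 - p) ^ ((⌈1 / p⌉₊ + 1) - 1))) ≥ c / p := by
  refine ⟨-Real.log (1 - Real.exp (-3)), ?_, ?_⟩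
  · have h1 : Real.exp (-3) < 1 := by
      rw [Real.exp_lt_one_iff]; norm_num
    have h2 : (0:ℝ) < Real.exp (-3) := Real.exp_pos _
    have : Real.log (1 - Real.exp (-3)) < 0 :=
      Real.log_neg (by linarith) (by linarith)
    linarith
  intro p hp hp2
  set n := ⌈1 / p⌉₊ with hn
  have hq0 : (0:ℝ) < 1 - p := by linarith
  have hq1 : (1:ℝ) - p < 1 := by linarith
  have hinv : (0:ℝ) < 1 / p := by positivity
  have hle : (1 / p : ℝ) ≤ n := Nat.le_ceil _
  have hlt : (n : ℝ) < 1 / p + 1 := Nat.ceil_lt_add_one (le_of_lt hinv)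
  -- q^n ≥ exp(-3)
  have hexp : Real.exp (-3) ≤ (1 - p) ^ n := by
    calc Real.exp (-3) ≤ Real.exp (-(2 * p) * n) := by
          apply Real.exp_le_exp.mpr
          have : (2:ℝ) * p * n < 2 * p * (1/p + 1) := by
            apply mul_lt_mul_of_pos_left hlt (by linarith)
          have h2 : (2:ℝ) * p * (1/p + 1) = 2 + 2*p := by
            field_simp
          nlinarith
      _ = (Real.exp (-(2 * p))) ^ n := by
          rw [← Real.exp_nat_mul]; ring_nf
      _ ≤ (1 - p) ^ n := by
          apply pow_le_pow_left₀ (le_of_lt (Real.exp_pos _))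
          exact exp_neg_two_le p hp hp2
  have hn1 : 1 ≤ n := by
    have : (1:ℝ) ≤ 1 / p := by
      rw [le_div_iff₀ hp]; linarith
    exact_mod_cast Nat.one_le_ceil_iff.mpr (by linarith)
  have hqn_lt : (1 - p) ^ n < 1 :=
    pow_lt_one₀ (le_of_lt hq0) hq1 (by omega)
  have hsub : (0:ℝ) < 1 - (1 - p) ^ n := by linarith
  have hsub3 : (0:ℝ) < 1 - Real.exp (-3) := by
    have : Real.exp (-3) < 1 := by rw [Real.exp_lt_one_iff]; norm_num
    linarith
  have hlog : -Real.log (1 - Real.exp (-3)) ≤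
      Real.log (1 / (1 - (1 - p) ^ n)) := by
    rw [Real.log_div one_ne_zero (ne_of_gt hsub)]
    have : Real.log (1 - (1 - p) ^ n) ≤ Real.log (1 - Real.exp (-3)) :=
      Real.log_le_log hsub (by linarith)
    simp only [Real.log_one]
    linarith
  have hE : ((n + 1) - 1 : ℕ) = n := by omega
  rw [hE]
  have hcpos : (0:ℝ) < -Real.log (1 - Real.exp (-3)) := by
    have : Real.log (1 - Real.exp (-3)) < 0 :=
      Real.log_neg (by linarith) (by nlinarith [Real.exp_pos (-3:ℝ)])
    linarith
  have hN : (1 / p : ℝ) ≤ ((n + 1 : ℕ) : ℝ) := by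
    push_cast; linarith
  calc (-Real.log (1 - Real.exp (-3))) / p
      = (1/p) * (-Real.log (1 - Real.exp (-3))) := by ring
    _ ≤ ((n + 1 : ℕ) : ℝ) * Real.log (1 / (1 - (1 - p) ^ n)) := by
        apply mul_le_mul hN hlog (le_of_lt hcpos) (by positivity)
end

section
/- Let q ∈ (0,1), p = 1 - q ≤ 1/2. For every integer x ≥ 2, x · ln(1/(1 - q^{x-1})) ≤ C/p for some absolute constant C > 0. That is, the quantity -𝓛(p) = max_{x≥2} x · ln(1/(1 - (1-p)^{x-1})) satisfies -𝓛(p) = O(1/p) uniformly. -/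
open Real

/- Put `t = p (x - 1)`. Then `(1 - p)^(x-1) ≤ e^{-t} ≤ 1/(1 + t)`, so
`ln (1/(1 - (1-p)^(x-1))) ≤ ln (1 + 1/t) ≤ 1/t`, and `x / t = x / (p (x - 1)) ≤ 2 / p`
because `x ≤ 2 (x - 1)` for `x ≥ 2`. -/

lemma one_sub_pow_le_inv_one_add_mul {p : ℝ} (hp0 : 0 ≤ p) (hp : p ≤ 1) (n : ℕ) :
    (1 - p) ^ n ≤ (1 + n * p)⁻¹ :=
  calc (1 - p) ^ n ≤ exp (-p) ^ n :=
        pow_le_pow_left₀ (by linarith) (by linarith [add_one_le_exp (-p)]) n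
    _ = (exp (n * p))⁻¹ := by rw [← exp_nat_mul, ← exp_neg, neg_mul_eq_mul_neg]
    _ ≤ (1 + n * p)⁻¹ := inv_anti₀ (by positivity) (by linarith [add_one_le_exp (n * p)])

lemma log_inv_one_sub_le_inv {a t : ℝ} (ht : 0 < t) (ha : a ≤ (1 + t)⁻¹) :
    log (1 - a)⁻¹ ≤ t⁻¹ := by
  have hgap : t / (1 + t) ≤ 1 - a := by
    have : t / (1 + t) = 1 - (1 + t)⁻¹ := by field_simp; ring
    linarith
  have hpos : 0 < 1 - a := lt_of_lt_of_le (by positivity) hgap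
  calc log (1 - a)⁻¹ ≤ (1 - a)⁻¹ - 1 := log_le_sub_one_of_pos (inv_pos.mpr hpos)
    _ ≤ (t / (1 + t))⁻¹ - 1 := by gcongr
    _ = t⁻¹ := by field_simp; ring

/-- There is a universal constant `C > 0` such that for all `p ∈ (0, 1/2]` and all
integers `x ≥ 2`, `x * ln(1/(1 - (1-p)^(x-1))) ≤ C / p`; i.e. `-𝓛(p) = O(1/p)`. -/
theorem stmt5 :
    ∃ C : ℝ, 0 < C ∧ ∀ p : ℝ, 0 < p → p ≤ 1 / 2 → ∀ x : ℕ, 2 ≤ x →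
      (x : ℝ) * Real.log (1 / (1 - (1 - p) ^ (x - 1))) ≤ C / p := by
  refine ⟨2, two_pos, fun p hp _ x hx => ?_⟩
  have hx1 : ((x - 1 : ℕ) : ℝ) = x - 1 := by rw [Nat.cast_sub (by omega), Nat.cast_one]
  have hxr : (2 : ℝ) ≤ x := by exact_mod_cast hx
  have ht : 0 < ((x - 1 : ℕ) : ℝ) * p := by rw [hx1]; nlinarith
  have hlog := log_inv_one_sub_le_inv ht
    (one_sub_pow_le_inv_one_add_mul hp.le (by linarith) (x - 1))
  rw [one_div]
  calc (x : ℝ) * log (1 - (1 - p) ^ (x - 1))⁻¹ ≤ x * (((x - 1 : ℕ) : ℝ) * p)⁻¹ :=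
        mul_le_mul_of_nonneg_left hlog (Nat.cast_nonneg x)
    _ ≤ 2 / p := by
        rw [hx1, ← div_eq_mul_inv, div_le_div_iff₀ (by nlinarith) hp]
        nlinarith
end

section
/- Let q ∈ (0,1) and consider a test design in which every test contains at least 2 items, with T tests and n items, where items are independently defective with probability p = 1-q. If test t contains x_t ≥ 2 items, then the probability that a fixed item i in test t is disguised in t equals 1 - q^{x_t - 1}, and the probability that item i is totally disguised is at least ∏_{t ∋ i} (1 - q^{x_t - 1}) with equality when the tests containing i are disjoint apart from i. Moreover, (1/n)·Σᵢ ln P[D_i] ≥ (T/n)·min_{x=2,...,n} x·ln(1 - q^{x-1}). -/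
/-!
Being disguised in a test `t ∋ i` means that one of the other `x_t - 1` items of `t` is defective,
which fails with probability `q ^ (x_t - 1)`. These events are increasing in the defectivity vector,
and a law with independent coordinates satisfies the FKG lattice condition
`μ{a} μ{b} ≤ μ{a ⊓ b} μ{a ⊔ b}` (with equality, coordinate by coordinate), so the FKG inequality
makes them positively correlated; when the tests through `i` share no other item the events depend
on disjoint sets of coordinates and are independent. Taking logarithms and summing over items counts
each test `t` exactly `x_t` times, so the average is at least `T / n` times the least value of
`x ↦ x · log (1 - q ^ (x - 1))`.
-/

open MeasureTheory ProbabilityTheory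
open scoped Finset

lemma IsUpperSet.monotone_indicator_one {α : Type*} [Preorder α] {s : Set α}
    (hs : IsUpperSet s) : Monotone (s.indicator (1 : α → ℝ)) := by
  intro a b hab
  by_cases ha : a ∈ s
  · simp [Set.indicator_of_mem ha, Set.indicator_of_mem (hs hab ha)]
  · simp only [Set.indicator_of_notMem ha]
    exact Set.indicator_nonneg (fun _ _ => zero_le_one) b

lemma sum_measureReal_singleton_mul_indicator_one {α : Type*} [Fintype α] [MeasurableSpace α]
    [MeasurableSingletonClass α] (μ : Measure α) [IsFiniteMeasure μ] (s : Set α) :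
    ∑ a, μ.real {a} * s.indicator 1 a = μ.real s := by
  classical
  simp [Set.indicator_apply, Finset.sum_ite]

section Harris

variable {α : Type*} [DistribLattice α] [Fintype α] [MeasurableSpace α]
  [MeasurableSingletonClass α] {μ : Measure α} [IsProbabilityMeasure μ]

theorem measureReal_mul_le_measureReal_inter_of_isUpperSet
    (hμ : ∀ a b, μ.real {a} * μ.real {b} ≤ μ.real {a ⊓ b} * μ.real {a ⊔ b})
    {s t : Set α} (hs : IsUpperSet s) (ht : IsUpperSet t) :
    μ.real s * μ.real t ≤ μ.real (s ∩ t) := by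
  have := fkg (s.indicator 1) (t.indicator 1) (fun a => μ.real {a}) (fun a => measureReal_nonneg)
    (Set.indicator_nonneg fun _ _ => zero_le_one)
    (Set.indicator_nonneg fun _ _ => zero_le_one) hs.monotone_indicator_one
    ht.monotone_indicator_one hμ
  simp_rw [← Pi.mul_apply (s.indicator 1), ← Set.inter_indicator_one,
    sum_measureReal_singleton_mul_indicator_one μ] at this
  simpa using this

theorem prod_measureReal_le_measureReal_biInter_of_isUpperSet
    (hμ : ∀ a b, μ.real {a} * μ.real {b} ≤ μ.real {a ⊓ b} * μ.real {a ⊔ b})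
    {κ : Type*} {s : κ → Set α} (hs : ∀ k, IsUpperSet (s k)) (F : Finset κ) :
    ∏ k ∈ F, μ.real (s k) ≤ μ.real (⋂ k ∈ F, s k) := by
  classical
  induction F using Finset.induction_on with
  | empty => simp
  | insert k F hk ih =>
    rw [Finset.prod_insert hk, Finset.set_biInter_insert]
    calc μ.real (s k) * ∏ k ∈ F, μ.real (s k)
        ≤ μ.real (s k) * μ.real (⋂ k ∈ F, s k) := by gcongr
      _ ≤ μ.real (s k ∩ ⋂ k ∈ F, s k) :=
        measureReal_mul_le_measureReal_inter_of_isUpperSet hμ (hs k)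
          (isUpperSet_iInter₂ fun k _ => hs k)

end Harris

lemma map_inf_mul_map_sup {γ M : Type*} [LinearOrder γ] [CommMonoid M] (f : γ → M) (a b : γ) :
    f (a ⊓ b) * f (a ⊔ b) = f a * f b := by
  rcases le_total a b with h | h <;> simp [h, mul_comm]

lemma preimage_image_restrict_of_dependsOn {ι : Type*} {π : ι → Type*} {S : Finset ι}
    {E : Set ((i : ι) → π i)}
    (hE : DependsOn (· ∈ E) S) : S.restrict ⁻¹' (S.restrict '' E) = E := by
  ext ω
  refine ⟨fun ⟨ω', hω', h⟩ => ?_, fun h => ⟨ω, h, rfl⟩⟩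
  exact cast (hE fun j hj => congrFun h ⟨j, hj⟩) hω'

section IndependentCoordinates

variable {ι β : Type*} [Fintype ι] [MeasurableSpace β] [MeasurableSingletonClass β]
  {μ : Measure (ι → β)}

lemma measureReal_singleton_eq_prod (hμ : iIndepFun (fun j (ω : ι → β) => ω j) μ)
    (ω₀ : ι → β) : μ.real {ω₀} = ∏ j, μ.real {ω | ω j = ω₀ j} := by
  have h : ({ω₀} : Set (ι → β)) = ⋂ j ∈ Finset.univ, (fun ω : ι → β => ω j) ⁻¹' {ω₀ j} := by
    ext ω
    simp [funext_iff]
  rw [measureReal_def, h, hμ.measure_inter_preimage_eq_mul _ fun _ _ => measurableSet_singleton _,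
    ENNReal.toReal_prod]
  rfl

lemma measureReal_singleton_mul_eq [LinearOrder β]
    (hμ : iIndepFun (fun j (ω : ι → β) => ω j) μ) (a b : ι → β) :
    μ.real {a} * μ.real {b} = μ.real {a ⊓ b} * μ.real {a ⊔ b} := by
  simp only [measureReal_singleton_eq_prod hμ, ← Finset.prod_mul_distrib]
  exact Finset.prod_congr rfl fun j _ =>
    (map_inf_mul_map_sup (fun x => μ.real {ω | ω j = x}) (a j) (b j)).symm

theorem prod_measure_le_measure_biInter_of_isUpperSet [LinearOrder β] [Finite β]
    (hμ : iIndepFun (fun j (ω : ι → β) => ω j) μ) {κ : Type*} {E : κ → Set (ι → β)}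
    (hE : ∀ k, IsUpperSet (E k)) (F : Finset κ) :
    ∏ k ∈ F, μ (E k) ≤ μ (⋂ k ∈ F, E k) := by
  have := hμ.isProbabilityMeasure
  have := Fintype.ofFinite β
  classical
  rw [← ENNReal.toReal_le_toReal (ENNReal.prod_ne_top fun _ _ => measure_ne_top _ _)
    (measure_ne_top _ _), ENNReal.toReal_prod]
  exact prod_measureReal_le_measureReal_biInter_of_isUpperSet
    (fun a b => (measureReal_singleton_mul_eq hμ a b).le) hE F

lemma measure_inter_eq_mul_of_dependsOn [Finite β]
    (hμ : iIndepFun (fun j (ω : ι → β) => ω j) μ) {S T : Finset ι} (hST : Disjoint S T)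
    {E E' : Set (ι → β)} (hE : DependsOn (· ∈ E) S) (hE' : DependsOn (· ∈ E') T) :
    μ (E ∩ E') = μ E * μ E' := by
  rw [← preimage_image_restrict_of_dependsOn hE, ← preimage_image_restrict_of_dependsOn hE']
  exact (hμ.indepFun_finset S T hST measurable_pi_apply).measure_inter_preimage_eq_mul _ _
    (Set.toFinite _).measurableSet (Set.toFinite _).measurableSet

theorem measure_biInter_eq_prod_of_dependsOn [Finite β]
    (hμ : iIndepFun (fun j (ω : ι → β) => ω j) μ) {κ : Type*} {A : κ → Finset ι}
    {E : κ → Set (ι → β)} (hE : ∀ k, DependsOn (· ∈ E k) (A k)) {F : Finset κ}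
    (hF : (F : Set κ).PairwiseDisjoint A) :
    μ (⋂ k ∈ F, E k) = ∏ k ∈ F, μ (E k) := by
  have := hμ.isProbabilityMeasure
  classical
  induction F using Finset.induction_on with
  | empty => simp
  | insert k F hk ih =>
    rw [Finset.coe_insert, Set.pairwiseDisjoint_insert] at hF
    have hdisj : Disjoint (A k) (F.biUnion A) := (Finset.disjoint_biUnion_right _ _ _).2
      fun k' hk' => hF.2 k' hk' fun h => hk (h ▸ hk')
    have hdep : DependsOn (· ∈ ⋂ k ∈ F, E k) (F.biUnion A) := fun x y h => propext <| by
      simp only [Set.mem_iInter₂]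
      exact forall₂_congr fun k' hk' => Iff.of_eq <|
        hE k' fun j hj => h j (Finset.mem_coe.2 (Finset.mem_biUnion.2 ⟨k', hk', hj⟩))
    rw [Finset.set_biInter_insert, Finset.prod_insert hk,
      measure_inter_eq_mul_of_dependsOn hμ hdisj (hE k) hdep, ih hF.1]

end IndependentCoordinates

lemma isUpperSet_setOf_exists_eq_true {ι : Type*} (S : Finset ι) :
    IsUpperSet {ω : ι → Bool | ∃ j ∈ S, ω j = true} := by
  rintro a b hab ⟨j, hj, ha⟩
  exact ⟨j, hj, le_antisymm (Bool.le_true _) (ha ▸ hab j)⟩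

lemma dependsOn_mem_setOf_exists_eq_true {ι : Type*} (S : Finset ι) :
    DependsOn (· ∈ {ω : ι → Bool | ∃ j ∈ S, ω j = true}) S := fun _ _ h =>
  propext ⟨fun ⟨j, hj, hx⟩ => ⟨j, hj, h j hj ▸ hx⟩,
    fun ⟨j, hj, hy⟩ => ⟨j, hj, (h j hj).symm ▸ hy⟩⟩

section BernoulliCoordinates

variable {ι : Type*} [Fintype ι] {μ : Measure (ι → Bool)} {q : ℝ}

lemma measure_eq_false_of_measure_eq_true [IsProbabilityMeasure μ] (hq : q ≤ 1) {j : ι}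
    (hj : μ {ω | ω j = true} = ENNReal.ofReal (1 - q)) :
    μ {ω | ω j = false} = ENNReal.ofReal q := by
  have hcompl : {ω : ι → Bool | ω j = false} = {ω | ω j = true}ᶜ := by
    ext ω
    simp
  rw [hcompl, prob_compl_eq_one_sub (Set.toFinite _).measurableSet, hj, ← ENNReal.ofReal_one,
    ← ENNReal.ofReal_sub _ (sub_nonneg.2 hq), sub_sub_cancel]

theorem measure_exists_eq_true (hμ : iIndepFun (fun j (ω : ι → Bool) => ω j) μ)
    (hq0 : 0 ≤ q) (hq1 : q ≤ 1)
    (hmarg : ∀ j, μ {ω | ω j = true} = ENNReal.ofReal (1 - q)) (S : Finset ι) :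
    μ {ω | ∃ j ∈ S, ω j = true} = ENNReal.ofReal (1 - q ^ #S) := by
  have := hμ.isProbabilityMeasure
  have hnone : μ {ω | ∀ j ∈ S, ω j = false} = ENNReal.ofReal (q ^ #S) := by
    have h : {ω : ι → Bool | ∀ j ∈ S, ω j = false} = ⋂ j ∈ S, (fun ω => ω j) ⁻¹' {false} := by
      ext ω
      simp
    rw [h, hμ.measure_inter_preimage_eq_mul S fun _ _ => measurableSet_singleton _,
      ENNReal.ofReal_pow hq0, ← Finset.prod_const]
    exact Finset.prod_congr rfl fun j _ => measure_eq_false_of_measure_eq_true hq1 (hmarg j)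
  have hcompl : {ω : ι → Bool | ∃ j ∈ S, ω j = true} = {ω | ∀ j ∈ S, ω j = false}ᶜ := by
    ext ω
    simp
  rw [hcompl, prob_compl_eq_one_sub (Set.toFinite _).measurableSet, hnone, ← ENNReal.ofReal_one,
    ← ENNReal.ofReal_sub _ (pow_nonneg hq0 _)]

end BernoulliCoordinates

lemma sum_sum_filter_mem_eq_sum_card_mul {ι κ : Type*} [Fintype ι] [Fintype κ] [DecidableEq ι]
    (A : κ → Finset ι) (c : κ → ℝ) :
    ∑ i, ∑ k with i ∈ A k, c k = ∑ k, #(A k) * c k := by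
  simp only [Finset.sum_filter]
  rw [Finset.sum_comm]
  simp [Finset.sum_ite_mem]

theorem card_mul_inf'_le_sum {ι κ : Type*} [Fintype ι] [Fintype κ] [DecidableEq ι]
    (A : κ → Finset ι) (g : ℕ → ℝ) {s : Finset ℕ} (hs : s.Nonempty) (hA : ∀ k, #(A k) ∈ s)
    {u : ι → ℝ} (hu : ∀ i, ∑ k with i ∈ A k, g #(A k) ≤ u i) :
    Fintype.card κ * s.inf' hs (fun x => x * g x) ≤ ∑ i, u i :=
  calc (Fintype.card κ : ℝ) * s.inf' hs (fun x => x * g x)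
      = ∑ _k : κ, s.inf' hs (fun x : ℕ => (x : ℝ) * g x) := by simp
    _ ≤ ∑ k, #(A k) * g #(A k) := Finset.sum_le_sum fun k _ => Finset.inf'_le _ (hA k)
    _ = ∑ i, ∑ k with i ∈ A k, g #(A k) := (sum_sum_filter_mem_eq_sum_card_mul _ _).symm
    _ ≤ ∑ i, u i := Finset.sum_le_sum fun i _ => hu i

lemma sum_log_le_log_toReal_of_prod_ofReal_le {κ : Type*} {F : Finset κ} {a : κ → ℝ}
    (ha : ∀ k ∈ F, 0 < a k) {x : ENNReal} (hx : x ≠ ⊤)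
    (h : ∏ k ∈ F, ENNReal.ofReal (a k) ≤ x) :
    ∑ k ∈ F, Real.log (a k) ≤ Real.log x.toReal := by
  rw [← Real.log_prod fun k hk => (ha k hk).ne']
  refine Real.log_le_log (Finset.prod_pos ha) ?_
  have := ENNReal.toReal_mono hx h
  rwa [ENNReal.toReal_prod, Finset.prod_congr rfl fun k hk => ENNReal.toReal_ofReal (ha k hk).le]
    at this

section GroupTesting

variable {ι κ : Type*} (tests : κ → Finset ι) (i : ι)

def disguisedIn (t : κ) : Set (ι → Bool) := {ω | ∃ j ∈ tests t, j ≠ i ∧ ω j = true}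

def totallyDisguised : Set (ι → Bool) := {ω | ∀ t, i ∈ tests t → ω ∈ disguisedIn tests i t}

variable [DecidableEq ι]

lemma disguisedIn_eq_setOf_exists_mem_erase (t : κ) :
    disguisedIn tests i t = {ω | ∃ j ∈ (tests t).erase i, ω j = true} := by
  ext ω
  simp [disguisedIn, and_assoc, and_left_comm]

lemma totallyDisguised_eq_biInter [Fintype κ] :
    totallyDisguised tests i = ⋂ t ∈ Finset.univ.filter (i ∈ tests ·), disguisedIn tests i t := by
  ext ω
  simp [totallyDisguised]

variable [Fintype ι] {tests i} {μ : Measure (ι → Bool)} {q : ℝ}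

theorem measure_disguisedIn (hμ : iIndepFun (fun j (ω : ι → Bool) => ω j) μ)
    (hq0 : 0 ≤ q) (hq1 : q ≤ 1) (hmarg : ∀ j, μ {ω | ω j = true} = ENNReal.ofReal (1 - q))
    {t : κ} (hi : i ∈ tests t) :
    μ (disguisedIn tests i t) = ENNReal.ofReal (1 - q ^ (#(tests t) - 1)) := by
  rw [disguisedIn_eq_setOf_exists_mem_erase, measure_exists_eq_true hμ hq0 hq1 hmarg,
    Finset.card_erase_of_mem hi]

lemma prod_measure_disguisedIn [Fintype κ] (hμ : iIndepFun (fun j (ω : ι → Bool) => ω j) μ)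
    (hq0 : 0 ≤ q) (hq1 : q ≤ 1) (hmarg : ∀ j, μ {ω | ω j = true} = ENNReal.ofReal (1 - q)) :
    ∏ t with i ∈ tests t, μ (disguisedIn tests i t) =
      ∏ t with i ∈ tests t, ENNReal.ofReal (1 - q ^ (#(tests t) - 1)) :=
  Finset.prod_congr rfl fun _ ht => measure_disguisedIn hμ hq0 hq1 hmarg (Finset.mem_filter.1 ht).2

theorem prod_le_measure_totallyDisguised [Fintype κ]
    (hμ : iIndepFun (fun j (ω : ι → Bool) => ω j) μ)
    (hq0 : 0 ≤ q) (hq1 : q ≤ 1) (hmarg : ∀ j, μ {ω | ω j = true} = ENNReal.ofReal (1 - q)) :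
    ∏ t with i ∈ tests t, ENNReal.ofReal (1 - q ^ (#(tests t) - 1)) ≤
      μ (totallyDisguised tests i) := by
  rw [← prod_measure_disguisedIn hμ hq0 hq1 hmarg, totallyDisguised_eq_biInter]
  simp_rw [disguisedIn_eq_setOf_exists_mem_erase]
  exact prod_measure_le_measure_biInter_of_isUpperSet hμ
    (fun _ => isUpperSet_setOf_exists_eq_true _) _

theorem prod_eq_measure_totallyDisguised [Fintype κ]
    (hμ : iIndepFun (fun j (ω : ι → Bool) => ω j) μ)
    (hq0 : 0 ≤ q) (hq1 : q ≤ 1) (hmarg : ∀ j, μ {ω | ω j = true} = ENNReal.ofReal (1 - q))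
    (hdisj : ∀ t t', t ≠ t' → i ∈ tests t → i ∈ tests t' →
      Disjoint (tests t \ {i}) (tests t' \ {i})) :
    ∏ t with i ∈ tests t, ENNReal.ofReal (1 - q ^ (#(tests t) - 1)) =
      μ (totallyDisguised tests i) := by
  rw [← prod_measure_disguisedIn hμ hq0 hq1 hmarg, totallyDisguised_eq_biInter]
  simp_rw [disguisedIn_eq_setOf_exists_mem_erase]
  refine (measure_biInter_eq_prod_of_dependsOn hμ
    (fun _ => dependsOn_mem_setOf_exists_eq_true _) ?_).symm
  intro t ht t' ht' hne
  simpa [Finset.sdiff_singleton_eq_erase] using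
    hdisj t t' hne (Finset.mem_filter.1 ht).2 (Finset.mem_filter.1 ht').2

theorem sum_log_le_log_measureReal_totallyDisguised [Fintype κ]
    (hμ : iIndepFun (fun j (ω : ι → Bool) => ω j) μ)
    (hq0 : 0 ≤ q) (hq1 : q < 1) (hmarg : ∀ j, μ {ω | ω j = true} = ENNReal.ofReal (1 - q))
    (hsize : ∀ t, 2 ≤ #(tests t)) (i : ι) :
    ∑ t with i ∈ tests t, Real.log (1 - q ^ (#(tests t) - 1)) ≤
      Real.log (μ.real (totallyDisguised tests i)) :=
  have := hμ.isProbabilityMeasure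
  sum_log_le_log_toReal_of_prod_ofReal_le
    (fun t _ => sub_pos.2 (pow_lt_one₀ hq0 hq1 (by have := hsize t; omega)))
    (measure_ne_top _ _) (prod_le_measure_totallyDisguised hμ hq0 hq1.le hmarg)

end GroupTesting

theorem stmt17_general (n T : ℕ) (hn : 2 ≤ n) (q : ℝ) (hq0 : 0 < q) (hq1 : q < 1)
    (tests : Fin T → Finset (Fin n)) (hsize : ∀ t, 2 ≤ (tests t).card)
    (μ : Measure (Fin n → Bool))
    (hindep : ProbabilityTheory.iIndepFun
      (fun (j : Fin n) (ω : Fin n → Bool) => ω j) μ)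
    (hmarg : ∀ j : Fin n, μ {ω | ω j = true} = ENNReal.ofReal (1 - q)) :
    (∀ (t : Fin T) (i : Fin n), i ∈ tests t →
        μ {ω | ∃ j ∈ tests t, j ≠ i ∧ ω j = true}
          = ENNReal.ofReal (1 - q ^ ((tests t).card - 1))) ∧
    (∀ i : Fin n,
        ∏ t ∈ Finset.univ.filter (fun t : Fin T => i ∈ tests t),
            ENNReal.ofReal (1 - q ^ ((tests t).card - 1))
          ≤ μ {ω | ∀ t : Fin T, i ∈ tests t → ∃ j ∈ tests t, j ≠ i ∧ ω j = true}) ∧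
    (∀ i : Fin n,
        (∀ t t' : Fin T, t ≠ t' → i ∈ tests t → i ∈ tests t' →
            Disjoint (tests t \ {i}) (tests t' \ {i})) →
        ∏ t ∈ Finset.univ.filter (fun t : Fin T => i ∈ tests t),
            ENNReal.ofReal (1 - q ^ ((tests t).card - 1))
          = μ {ω | ∀ t : Fin T, i ∈ tests t → ∃ j ∈ tests t, j ≠ i ∧ ω j = true}) ∧
    ((T : ℝ) / n *
        (Finset.Icc 2 n).inf' (Finset.nonempty_Icc.mpr hn)
          (fun x : ℕ => (x : ℝ) * Real.log (1 - q ^ (x - 1)))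
      ≤ (1 / n) * ∑ i : Fin n,
          Real.log
            ((μ {ω | ∀ t : Fin T, i ∈ tests t → ∃ j ∈ tests t, j ≠ i ∧ ω j = true}).toReal)) := by
  refine ⟨fun t i hi => measure_disguisedIn hindep hq0.le hq1.le hmarg hi,
    fun i => prod_le_measure_totallyDisguised hindep hq0.le hq1.le hmarg,
    fun i hdisj => prod_eq_measure_totallyDisguised hindep hq0.le hq1.le hmarg hdisj, ?_⟩
  have h := card_mul_inf'_le_sum tests (fun x => Real.log (1 - q ^ (x - 1)))
    (Finset.nonempty_Icc.mpr hn) (fun t => Finset.mem_Icc.2 ⟨hsize t, card_finset_fin_le _⟩)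
    (sum_log_le_log_measureReal_totallyDisguised hindep hq0.le hq1 hmarg hsize)
  rw [Fintype.card_fin] at h
  rw [div_mul_eq_mul_div, one_div_mul_eq_div]
  exact div_le_div_of_nonneg_right h (Nat.cast_nonneg n)

/-- Aldridge's disguising bound. In a design where every test has ≥ 2 items and items
are independently defective with probability `p = 1 - q`: (i) a fixed item `i` in test
`t` of size `x_t` is disguised in `t` with probability `1 - q^(x_t - 1)`; (ii) the
probability that `i` is totally disguised is at least `∏_{t ∋ i} (1 - q^(x_t - 1))`,
with equality when the tests containing `i` are disjoint apart from `i`; and (iii)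
`(1/n)·Σᵢ ln P[D_i] ≥ (T/n)·min_{x = 2,…,n} x·ln(1 - q^(x-1))`. -/
theorem stmt17 (n T : ℕ) (hn : 2 ≤ n) (q : ℝ) (hq0 : 0 < q) (hq1 : q < 1)
    (tests : Fin T → Finset (Fin n)) (hsize : ∀ t, 2 ≤ (tests t).card)
    (μ : Measure (Fin n → Bool)) [IsProbabilityMeasure μ]
    (hindep : ProbabilityTheory.iIndepFun
      (fun (j : Fin n) (ω : Fin n → Bool) => ω j) μ)
    (hmarg : ∀ j : Fin n, μ {ω | ω j = true} = ENNReal.ofReal (1 - q)) :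
    (∀ (t : Fin T) (i : Fin n), i ∈ tests t →
        μ {ω | ∃ j ∈ tests t, j ≠ i ∧ ω j = true}
          = ENNReal.ofReal (1 - q ^ ((tests t).card - 1))) ∧
    (∀ i : Fin n,
        ∏ t ∈ Finset.univ.filter (fun t : Fin T => i ∈ tests t),
            ENNReal.ofReal (1 - q ^ ((tests t).card - 1))
          ≤ μ {ω | ∀ t : Fin T, i ∈ tests t → ∃ j ∈ tests t, j ≠ i ∧ ω j = true}) ∧
    (∀ i : Fin n,
        (∀ t t' : Fin T, t ≠ t' → i ∈ tests t → i ∈ tests t' →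
            Disjoint (tests t \ {i}) (tests t' \ {i})) →
        ∏ t ∈ Finset.univ.filter (fun t : Fin T => i ∈ tests t),
            ENNReal.ofReal (1 - q ^ ((tests t).card - 1))
          = μ {ω | ∀ t : Fin T, i ∈ tests t → ∃ j ∈ tests t, j ≠ i ∧ ω j = true}) ∧
    ((T : ℝ) / n *
        (Finset.Icc 2 n).inf' (Finset.nonempty_Icc.mpr hn)
          (fun x : ℕ => (x : ℝ) * Real.log (1 - q ^ (x - 1)))
      ≤ (1 / n) * ∑ i : Fin n,
          Real.log
            ((μ {ω | ∀ t : Fin T, i ∈ tests t → ∃ j ∈ tests t, j ≠ i ∧ ω j = true}).toReal)) :=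
  stmt17_general n T hn q hq0 hq1 tests hsize μ hindep hmarg
end
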